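/- arXiv:1209.2886 — 3 statements merged into one kernel-verified Lean document; each statement's English description precedes it below -/
import Mathlib

section
/- Let G be a finite group with subgroups V_k ≤ G_k. If V_k < G_k and there exists a normal subgroup N of G with V_k ≤ N < G_k such that V_{k-1}/N = (G_{k-1}/N) ∩ Z(G/N), then V_{k-1} = G_{k-1} ∩ Y_k, where Y_k/V_k = Z(G/V_k). -/
open Subgroup
open scoped Pointwise

/-- The vanishing-off subgroup `V(G)`: generated by all `g` at which some
nonlinear irreducible character does not vanish. -/
def vanishingOff (G : Type) [Group G] : Subgroup G :=
  Subgroup.closure {g | ∃ V : FDRep ℂ G, CategoryTheory.Simple V ∧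
    1 < Module.finrank ℂ V ∧ FDRep.character V g ≠ 0}

instance vanishingOff_normal (G : Type) [Group G] : (vanishingOff G).Normal := by
  constructor
  intro n hn g
  have hset : ∀ x ∈ {g | ∃ V : FDRep ℂ G, CategoryTheory.Simple V ∧
      1 < Module.finrank ℂ V ∧ FDRep.character V g ≠ 0}, ∀ h : G,
      h * x * h⁻¹ ∈ vanishingOff G := by
    intro x hx h
    apply Subgroup.subset_closure
    obtain ⟨V, h1, h2, h3⟩ := hx
    exact ⟨V, h1, h2, by rwa [FDRep.char_conj]⟩
  induction hn using Subgroup.closure_induction with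
  | mem x hx => exact hset x hx g
  | one => simpa using (vanishingOff G).one_mem
  | mul x y _ _ hx hy =>
      have : g * (x * y) * g⁻¹ = (g * x * g⁻¹) * (g * y * g⁻¹) := by group
      rw [this]; exact mul_mem hx hy
  | inv x _ hx =>
      have : g * x⁻¹ * g⁻¹ = (g * x * g⁻¹)⁻¹ := by group
      rw [this]; exact inv_mem hx

/-- `paperV G i` is `V_i` : `V_1 = V(G)`, `V_i = [V_{i-1}, G]`. -/
def paperV (G : Type) [Group G] : ℕ → Subgroup G
  | 0 => ⊤
  | 1 => vanishingOff G
  | (n+2) => ⁅paperV G (n+1), (⊤ : Subgroup G)⁆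

instance paperV_normal (G : Type) [Group G] (i : ℕ) : (paperV G i).Normal := by
  induction i with
  | zero => exact inferInstanceAs (⊤ : Subgroup G).Normal
  | succ n ih =>
    match n, ih with
    | 0, _ => exact inferInstanceAs (vanishingOff G).Normal
    | (m+1), ih => exact Subgroup.commutator_normal _ _

/-- `paperLCS G i` is `G_i`, the `i`-th term of the lower central series with
the paper's indexing: `G_1 = G`, `G_{i+1} = [G_i, G]`. -/
def paperLCS (G : Type) [Group G] (i : ℕ) : Subgroup G := (⊤ : Subgroup G).lowerCentralSeries (i - 1)

instance paperLCS_normal (G : Type) [Group G] (i : ℕ) : (paperLCS G i).Normal :=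
  Subgroup.lowerCentralSeries_normal _ _

/-- `Y_i`, defined by `Y_i/V_i = Z(G/V_i)`. -/
def paperY (G : Type) [Group G] (i : ℕ) : Subgroup G :=
  (Subgroup.center (G ⧸ paperV G i)).comap (QuotientGroup.mk' (paperV G i))

instance paperY_normal (G : Type) [Group G] (i : ℕ) : (paperY G i).Normal :=
  Subgroup.Normal.comap inferInstance _

/-- `D_i`, defined by `D_i/V_i = C_{G/V_i}(G_{i-1}/V_i)`. -/
def paperD (G : Type) [Group G] (i : ℕ) : Subgroup G :=
  (Subgroup.centralizer (((paperLCS G (i-1)).map (QuotientGroup.mk' (paperV G i))) :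
      Set (G ⧸ paperV G i))).comap (QuotientGroup.mk' (paperV G i))

instance paperLCSinfY_normal (G : Type) [Group G] (i j : ℕ) :
    (paperLCS G i ⊓ paperY G j).Normal := Subgroup.normal_inf_normal _ _

/-- `E_i`, defined by `E_i/(G_{i-1} ∩ Y_i) = C_{G/(G_{i-1} ∩ Y_i)}(G_{i-2}/(G_{i-1} ∩ Y_i))`. -/
def paperE (G : Type) [Group G] (i : ℕ) : Subgroup G :=
  (Subgroup.centralizer (((paperLCS G (i-2)).map
      (QuotientGroup.mk' (paperLCS G (i-1) ⊓ paperY G i))) :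
      Set (G ⧸ (paperLCS G (i-1) ⊓ paperY G i)))).comap
    (QuotientGroup.mk' (paperLCS G (i-1) ⊓ paperY G i))

/-- `G_i` is `H_1`: for every normal `N` with `V_i ≤ N < G_i`,
`V_{i-1}/N = (G_{i-1}/N) ∩ Z(G/N)`. -/
def IsH1 (G : Type) [Group G] (i : ℕ) : Prop :=
  ∀ (N : Subgroup G) (hN : N.Normal), paperV G i ≤ N → N < paperLCS G i →
    letI := hN
    (paperV G (i-1)).map (QuotientGroup.mk' N) =
      (paperLCS G (i-1)).map (QuotientGroup.mk' N) ⊓ Subgroup.center (G ⧸ N)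
open Module LinearMap CategoryTheory

namespace VOAux

variable {G : Type} [Group G]

/-- In a 1-dimensional space every endomorphism is `trace f • id`. -/
lemma eq_smul_id_of_finrank_one {M : Type} [AddCommGroup M] [Module ℂ M] [FiniteDimensional ℂ M]
    (h : finrank ℂ M = 1) (f : M →ₗ[ℂ] M) : f = (trace ℂ M f) • LinearMap.id := by
  classical
  let b : Basis (Fin 1) ℂ M := finBasisOfFinrankEq ℂ M h
  apply (LinearMap.toMatrix b b).injective
  have htr : trace ℂ M f = (LinearMap.toMatrix b b f) 0 0 := by
    rw [LinearMap.trace_eq_matrix_trace ℂ b f, Matrix.trace]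
    simp [Matrix.diag]
  ext i j
  fin_cases i; fin_cases j
  simp [htr, Matrix.one_apply]

lemma trace_mul_of_finrank_one {M : Type} [AddCommGroup M] [Module ℂ M] [FiniteDimensional ℂ M]
    (h : finrank ℂ M = 1) (f f' : M →ₗ[ℂ] M) :
    trace ℂ M (f * f') = trace ℂ M f * trace ℂ M f' := by
  have key : f * f' = (trace ℂ M f * trace ℂ M f') • LinearMap.id := by
    conv_lhs => rw [eq_smul_id_of_finrank_one h f, eq_smul_id_of_finrank_one h f']
    ext x
    simp only [Module.End.mul_apply, LinearMap.smul_apply, LinearMap.id_apply, map_smul,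
      LinearMap.smul_apply]
    rw [smul_smul, mul_comm]
  rw [key, map_smul, trace_id, h]
  simp

lemma trace_one_dim_rep {M : Type} [AddCommGroup M] [Module ℂ M] [FiniteDimensional ℂ M]
    (ρ : Representation ℂ G M) (h : finrank ℂ M = 1) {g : G} (hg : g ∈ commutator G) :
    trace ℂ M (ρ g) = 1 := by
  let χ : G →* ℂ :=
    { toFun := fun x => trace ℂ M (ρ x)
      map_one' := by
        show trace ℂ M (ρ 1) = 1
        rw [map_one, show (1 : M →ₗ[ℂ] M) = LinearMap.id from rfl, trace_id, h]
        simp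
      map_mul' := fun x y => by
        show trace ℂ M (ρ (x * y)) = trace ℂ M (ρ x) * trace ℂ M (ρ y)
        rw [map_mul]
        exact trace_mul_of_finrank_one h _ _ }
  have h1 : χ.toHomUnits g = 1 := Abelianization.commutator_subset_ker χ.toHomUnits hg
  have h2 := MonoidHom.coe_toHomUnits χ g
  rw [h1] at h2
  exact (by simpa using h2.symm : χ g = 1)

/-- The restriction of a representation to an invariant submodule. -/
def subRep {M : Type} [AddCommGroup M] [Module ℂ M] (ρ : Representation ℂ G M)
    (p : Submodule ℂ M) (hp : ∀ g : G, ∀ x ∈ p, ρ g x ∈ p) : Representation ℂ G p where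
  toFun g := (ρ g).restrict (hp g)
  map_one' := by
    ext x
    simp [LinearMap.restrict_apply]
  map_mul' g h := by
    ext x
    simp [LinearMap.restrict_apply, Module.End.mul_apply]

@[simp] lemma subRep_coe_apply {M : Type} [AddCommGroup M] [Module ℂ M] (ρ : Representation ℂ G M)
    (p : Submodule ℂ M) (hp : ∀ g : G, ∀ x ∈ p, ρ g x ∈ p) (g : G) (x : p) :
    (subRep ρ p hp g x : M) = ρ g x := rfl

/-- Maschke: an invariant submodule has an invariant complement. -/
lemma exists_invariant_compl [Fintype G] {M : Type} [AddCommGroup M] [Module ℂ M]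
    (ρ : Representation ℂ G M) (p : Submodule ℂ M) (hp : ∀ g : G, ∀ x ∈ p, ρ g x ∈ p) :
    ∃ q : Submodule ℂ M, (∀ g : G, ∀ x ∈ q, ρ g x ∈ q) ∧ IsCompl p q := by
  classical
  obtain ⟨q₀, hq₀⟩ := Submodule.exists_isCompl p
  set π₀ : M →ₗ[ℂ] p := p.projectionOnto q₀ hq₀ with hπ₀
  set c : ℂ := (Fintype.card G : ℂ)⁻¹ with hc
  set e : M →ₗ[ℂ] M :=
    c • ∑ g : G, (ρ g⁻¹) ∘ₗ (p.subtype ∘ₗ π₀) ∘ₗ (ρ g) with he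
  have hcard : (Fintype.card G : ℂ) ≠ 0 := by
    exact_mod_cast Fintype.card_ne_zero
  have hmem : ∀ x : M, e x ∈ p := by
    intro x
    rw [he]
    simp only [LinearMap.smul_apply, LinearMap.sum_apply, LinearMap.comp_apply,
      Submodule.coe_subtype]
    exact Submodule.smul_mem _ _ (Submodule.sum_mem _ fun g _ =>
      hp g⁻¹ _ (π₀ (ρ g x)).2)
  have hid : ∀ x ∈ p, e x = x := by
    intro x hx
    rw [he]
    simp only [LinearMap.smul_apply, LinearMap.sum_apply, LinearMap.comp_apply,
      Submodule.coe_subtype]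
    have h3 : ∀ g : G, ρ g⁻¹ ((π₀ (ρ g x) : M)) = x := by
      intro g
      have hmem' : ρ g x ∈ p := hp g x hx
      rw [show ρ g x = ((⟨ρ g x, hmem'⟩ : p) : M) from rfl,
        Submodule.projectionOnto_apply_left hq₀]
      show ρ g⁻¹ (ρ g x) = x
      rw [← Module.End.mul_apply, ← map_mul, inv_mul_cancel, map_one, Module.End.one_apply]
    rw [Finset.sum_congr rfl fun g _ => h3 g]
    rw [Finset.sum_const, Finset.card_univ, ← Nat.cast_smul_eq_nsmul ℂ, smul_smul, hc,
      inv_mul_cancel₀ hcard, one_smul]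
  have hcomm : ∀ (h : G) (x : M), e (ρ h x) = ρ h (e x) := by
    intro h x
    rw [he]
    simp only [LinearMap.smul_apply, LinearMap.sum_apply, LinearMap.comp_apply,
      Submodule.coe_subtype, map_smul, map_sum]
    congr 1
    refine Fintype.sum_equiv (Equiv.mulRight h) _ _ ?_
    intro g
    simp only [Equiv.coe_mulRight]
    have h1 : ρ (g * h) x = ρ g (ρ h x) := by rw [map_mul]; rfl
    rw [h1, ← Module.End.mul_apply (ρ h), ← map_mul, mul_inv_rev, mul_inv_cancel_left]
  set f : M →ₗ[ℂ] p := LinearMap.codRestrict p e hmem with hf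
  have hfid : ∀ x : p, f x = x := by
    intro x
    apply Subtype.ext
    simpa [hf] using hid x x.2
  refine ⟨LinearMap.ker f, ?_, LinearMap.isCompl_of_proj hfid⟩
  intro g x hx
  have hx' : e x = 0 := by
    simpa [hf] using congrArg (fun y : p => (y : M)) hx
  have h0 : e (ρ g x) = 0 := by rw [hcomm g x, hx', map_zero]
  show f (ρ g x) = 0
  apply Subtype.ext
  simpa [hf]



lemma trace_eq_add_of_isCompl {M : Type} [AddCommGroup M] [Module ℂ M] [FiniteDimensional ℂ M]
    (f : M →ₗ[ℂ] M) (p q : Submodule ℂ M) (h : IsCompl p q)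
    (hp : ∀ x ∈ p, f x ∈ p) (hq : ∀ x ∈ q, f x ∈ q) :
    trace ℂ M f = trace ℂ p (f.restrict hp) + trace ℂ q (f.restrict hq) := by
  let e := Submodule.prodEquivOfIsCompl p q h
  have hez : ∀ z : p × q, (e z : M) = (z.1 : M) + (z.2 : M) := by
    intro z
    rw [show (e z : M) = ((e : (p × q) →ₗ[ℂ] M) z : M) from rfl,
      Submodule.coe_prodEquivOfIsCompl, LinearMap.coprod_apply]
    rfl
  have key : e.conj ((f.restrict hp).prodMap (f.restrict hq)) = f := by
    ext x
    rw [LinearEquiv.conj_apply_apply]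
    set z := e.symm x with hz
    have hx : x = e z := by rw [hz, LinearEquiv.apply_symm_apply]
    rw [hx, hez, hez]
    simp only [LinearMap.prodMap_apply, LinearMap.restrict_coe_apply, map_add]
  conv_lhs => rw [← key]
  rw [LinearMap.trace_conj', LinearMap.trace_prodMap']


lemma simple_of_minimal {M : Type} [AddCommGroup M] [Module ℂ M] [FiniteDimensional ℂ M]
    (ρ : Representation ℂ G M) (p : Submodule ℂ M) (hp : ∀ g : G, ∀ x ∈ p, ρ g x ∈ p)
    (hne : p ≠ ⊥)
    (hmin : ∀ q : Submodule ℂ M, (∀ g : G, ∀ x ∈ q, ρ g x ∈ q) → q ≠ ⊥ → q ≤ p → q = p) :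
    Simple (FDRep.of (subRep ρ p hp)) := by
  set W := FDRep.of (subRep ρ p hp) with hWdef
  constructor
  intro Y f hmono
  constructor
  · intro hiso h0
    have hf0 : f.hom = 0 := by rw [h0]; rfl
    have hid : inv f ≫ f = 𝟙 W := IsIso.inv_hom_id f
    have hid' : ∀ x : p, x = 0 := by
      intro x
      have h1 := congrArg (fun u : W ⟶ W => u.hom x) hid
      simp only [Action.comp_hom, Action.id_hom] at h1
      rw [show ((inv f).hom ≫ f.hom) x = f.hom ((inv f).hom x) from rfl, hf0] at h1
      exact h1.symm.trans rfl
    obtain ⟨a, b, hab⟩ := (Submodule.nontrivial_iff_ne_bot.mpr hne).exists_pair_ne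
    exact hab ((hid' a).trans (hid' b).symm)
  · intro h0
    set fl : Y →ₗ[ℂ] p := f.hom.hom.hom with hfl
    have hflapp : ∀ (g : G) (y : Y), fl (Y.ρ g y) = subRep ρ p hp g (fl y) := by
      intro g y
      have := congrArg (fun u => u.hom.hom y) (f.comm g)
      exact this
    -- injectivity
    have hK : ∀ g : G, ∀ x ∈ LinearMap.ker fl, Y.ρ g x ∈ LinearMap.ker fl := by
      intro g x hx
      rw [LinearMap.mem_ker] at hx ⊢
      rw [hflapp, hx, map_zero]
    set Z := FDRep.of (subRep Y.ρ (LinearMap.ker fl) hK) with hZ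
    have hcomm : ∀ g : G, (Action.ρ Z) g ≫ (FGModuleCat.ofHom (LinearMap.ker fl).subtype : Z.V ⟶ Y.V)
        = (FGModuleCat.ofHom (LinearMap.ker fl).subtype : Z.V ⟶ Y.V) ≫ (Action.ρ Y) g := by
      intro g
      ext x
      rfl
    set ι : Z ⟶ Y := Action.Hom.mk (FGModuleCat.ofHom (LinearMap.ker fl).subtype : Z.V ⟶ Y.V) hcomm with hιdef
    have hcompzero : ι ≫ f = (0 : Z ⟶ Y) ≫ f := by
      rw [Limits.zero_comp]
      ext x
      show ((fl ((LinearMap.ker fl).subtype x) : p) : M) = ((0 : p) : M)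
      exact congrArg Subtype.val x.2
    have hι0 : ι = 0 := Mono.right_cancellation _ _ hcompzero
    have hinj : Function.Injective fl := by
      rw [← LinearMap.ker_eq_bot]
      ext x
      simp only [Submodule.mem_bot]
      constructor
      · intro hx
        have := congrArg (fun u : Z ⟶ Y => u.hom ⟨x, hx⟩) hι0
        exact this
      · intro hx; rw [hx]; exact (LinearMap.ker fl).zero_mem
    -- surjectivity
    have hfl0 : fl ≠ 0 := by
      intro hc
      apply h0
      ext y
      show ((fl y : p) : M) = (((0 : Y ⟶ W).hom.hom.hom y : p) : M)
      rw [hc]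
      rfl
    obtain ⟨y0, hy0⟩ : ∃ y, fl y ≠ 0 := by
      by_contra hc
      push_neg at hc
      exact hfl0 (LinearMap.ext hc)
    have hqinv : ∀ g : G, ∀ x ∈ (LinearMap.range fl).map p.subtype,
        ρ g x ∈ (LinearMap.range fl).map p.subtype := by
      intro g x hx
      obtain ⟨w, ⟨y, hy⟩, rfl⟩ := hx
      refine ⟨subRep ρ p hp g w, ⟨Y.ρ g y, ?_⟩, ?_⟩
      · rw [hflapp, hy]
      · exact (subRep_coe_apply ρ p hp g w)
    have hqne : (LinearMap.range fl).map p.subtype ≠ ⊥ := by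
      intro hc
      apply hy0
      have hmem : (fl y0 : M) ∈ ((LinearMap.range fl).map p.subtype : Submodule ℂ M) :=
        ⟨fl y0, ⟨y0, rfl⟩, rfl⟩
      rw [hc, Submodule.mem_bot] at hmem
      exact Subtype.ext hmem
    have hq := hmin _ hqinv hqne (Submodule.map_subtype_le _ _)
    have hrange : LinearMap.range fl = ⊤ := by
      apply Submodule.map_injective_of_injective (Submodule.injective_subtype p)
      rw [Submodule.map_subtype_top, hq]
    have hsurj : Function.Surjective fl := LinearMap.range_eq_top.mp hrange
    -- build the inverse
    set e : Y ≃ₗ[ℂ] p := LinearEquiv.ofBijective fl ⟨hinj, hsurj⟩ with he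
    have hea : ∀ y, e y = fl y := fun _ => rfl
    have hgcomm : ∀ g : G, (Action.ρ W) g ≫ (FGModuleCat.ofHom (e.symm : p →ₗ[ℂ] Y) : W.V ⟶ Y.V)
        = (FGModuleCat.ofHom (e.symm : p →ₗ[ℂ] Y) : W.V ⟶ Y.V) ≫ (Action.ρ Y) g := by
      intro g
      ext w
      apply hinj
      show fl (e.symm (subRep ρ p hp g w)) = fl (Y.ρ g (e.symm w))
      rw [hflapp]
      rw [show fl (e.symm (subRep ρ p hp g w)) = e (e.symm (subRep ρ p hp g w)) from rfl,
        LinearEquiv.apply_symm_apply]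
      rw [show fl (e.symm w) = e (e.symm w) from rfl, LinearEquiv.apply_symm_apply]
    refine ⟨⟨Action.Hom.mk (FGModuleCat.ofHom (e.symm : p →ₗ[ℂ] Y) : W.V ⟶ Y.V) hgcomm, ?_, ?_⟩⟩
    · ext y
      show e.symm (fl y) = y
      rw [← hea, LinearEquiv.symm_apply_apply]
    · ext w
      show ((fl (e.symm w) : p) : M) = (w : M)
      rw [← hea, LinearEquiv.apply_symm_apply]


lemma char_nat [Fintype G] {g : G} (hg : g ∈ commutator G)
    (hyp : ∀ V : FDRep ℂ G, Simple V → 1 < finrank ℂ V → FDRep.character V g = 0) :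
    ∀ (n : ℕ) (M : Type) [AddCommGroup M] [Module ℂ M] [FiniteDimensional ℂ M]
      (ρ : Representation ℂ G M), finrank ℂ M = n → ∃ m : ℕ, trace ℂ M (ρ g) = m := by
  intro n
  induction n using Nat.strong_induction_on with
  | _ n ih =>
    intro M _ _ _ ρ hrank
    rcases Nat.eq_zero_or_pos n with hn | hn
    · subst hn
      have : Subsingleton M := finrank_zero_iff.mp hrank
      exact ⟨0, by rw [show ρ g = 0 from Subsingleton.elim _ _, map_zero, Nat.cast_zero]⟩
    · have hM : Nontrivial M := by
        by_contra hc
        rw [not_nontrivial_iff_subsingleton] at hc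
        rw [(finrank_zero_iff (R := ℂ) (M := M)).mpr hc] at hrank
        omega
      have hStop : finrank ℂ (⊤ : Submodule ℂ M) ∈
          {d | ∃ q : Submodule ℂ M, (∀ g' : G, ∀ x ∈ q, ρ g' x ∈ q) ∧ q ≠ ⊥ ∧ finrank ℂ q = d} :=
        ⟨⊤, fun _ _ _ => Submodule.mem_top, by
          rw [Ne, Submodule.eq_bot_iff]
          intro hc
          obtain ⟨x, hx⟩ := exists_ne (0 : M)
          exact hx (hc x Submodule.mem_top), rfl⟩
      obtain ⟨W, hWinv, hWne, hWrank⟩ := Nat.sInf_mem (Set.nonempty_of_mem hStop)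
      have hmin : ∀ q : Submodule ℂ M, (∀ g' : G, ∀ x ∈ q, ρ g' x ∈ q) → q ≠ ⊥ → q ≤ W →
          q = W := by
        intro q hq hqne hle
        refine Submodule.eq_of_le_of_finrank_le hle ?_
        rw [hWrank]
        exact Nat.sInf_le ⟨q, hq, hqne, rfl⟩
      obtain ⟨Q, hQinv, hQcompl⟩ := exists_invariant_compl ρ W hWinv
      have tradd := trace_eq_add_of_isCompl (ρ g) W Q hQcompl (hWinv g) (hQinv g)
      have hWnt : Nontrivial W := Submodule.nontrivial_iff_ne_bot.mpr hWne
      have hWpos : 0 < finrank ℂ W := finrank_pos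
      have hWtr : ∃ a : ℕ, trace ℂ W ((ρ g).restrict (hWinv g)) = a := by
        rcases eq_or_lt_of_le (show 1 ≤ finrank ℂ W from hWpos) with h1 | h1
        · exact ⟨1, by
            have := trace_one_dim_rep (subRep ρ W hWinv) h1.symm hg
            rw [Nat.cast_one]; exact this⟩
        · have hs := simple_of_minimal ρ W hWinv hWne hmin
          have hchar := hyp (FDRep.of (subRep ρ W hWinv)) hs (by
            show (1 : ℕ) < finrank ℂ W
            exact h1)
          refine ⟨0, ?_⟩
          rw [Nat.cast_zero]
          have hcc : FDRep.character (FDRep.of (subRep ρ W hWinv)) g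
              = trace ℂ W ((ρ g).restrict (hWinv g)) := rfl
          rw [← hcc, hchar]
      have hQrank : finrank ℂ Q < n := by
        have hsum := Submodule.finrank_add_eq_of_isCompl hQcompl
        rw [hrank] at hsum
        omega
      obtain ⟨m, hm⟩ := ih (finrank ℂ Q) hQrank Q (subRep ρ Q hQinv) rfl
      obtain ⟨a, ha⟩ := hWtr
      refine ⟨a + m, ?_⟩
      rw [tradd, ha, show trace ℂ Q ((ρ g).restrict (hQinv g)) = m from hm, Nat.cast_add]

lemma regular_char_contradiction [Fintype G] {g : G} (hg : g ∈ commutator G)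
    (hg1 : g ≠ 1)
    (hyp : ∀ V : FDRep ℂ G, Simple V → 1 < finrank ℂ V → FDRep.character V g = 0) : False := by
  classical
  set ρ : Representation ℂ G (G →₀ ℂ) :=
    { toFun := fun g => Finsupp.lmapDomain ℂ ℂ (g • ·)
      map_one' := by ext; simp
      map_mul' := fun x y => by ext; simp [mul_smul, mul_assoc] } with hρ
  have htr : trace ℂ (G →₀ ℂ) (ρ g) = 0 := by
    rw [LinearMap.trace_eq_matrix_trace ℂ (Finsupp.basisSingleOne) (ρ g), Matrix.trace]
    refine Finset.sum_eq_zero ?_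
    intro h _
    have hne : g * h ≠ h := fun hc => hg1 (mul_eq_right.mp hc)
    simp only [Matrix.diag, LinearMap.toMatrix_apply, Finsupp.basisSingleOne_repr,
      Finsupp.coe_basisSingleOne, LinearEquiv.refl_apply, hρ,
      MonoidHom.coe_mk, OneHom.coe_mk, Finsupp.lmapDomain_apply,
        Finsupp.mapDomain_single, smul_eq_mul]
    rw [Finsupp.single_apply, if_neg hne]
  set u : G →₀ ℂ := ∑ h : G, Finsupp.single h 1 with hu
  have hμ : ∀ x : G, ρ x u = u := by
    intro x
    rw [hu, map_sum]
    refine Fintype.sum_equiv (Equiv.mulLeft x) _ _ ?_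
    intro h
    simp only [hρ, MonoidHom.coe_mk, OneHom.coe_mk, Finsupp.lmapDomain_apply,
      Finsupp.mapDomain_single]
    simp
  have hune : u ≠ 0 := by
    intro hc
    have h1 : u 1 = (1 : ℂ) := by
      rw [hu, Finsupp.finset_sum_apply]
      rw [Finset.sum_congr rfl (fun h _ => Finsupp.single_apply)]
      rw [Finset.sum_ite_eq' Finset.univ (1 : G) (fun _ => (1 : ℂ))]
      simp
    rw [hc] at h1
    simp at h1
  set W₀ : Submodule ℂ (G →₀ ℂ) := Submodule.span ℂ {u} with hW₀
  have hW₀inv : ∀ x : G, ∀ v ∈ W₀, ρ x v ∈ W₀ := by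
    intro x v hv
    rw [hW₀, Submodule.mem_span_singleton] at hv ⊢
    obtain ⟨c, rfl⟩ := hv
    exact ⟨c, by rw [map_smul, hμ]⟩
  have hW₀rank : finrank ℂ W₀ = 1 := finrank_span_singleton hune
  obtain ⟨Q, hQinv, hQcompl⟩ := exists_invariant_compl ρ W₀ hW₀inv
  have tradd := trace_eq_add_of_isCompl (ρ g) W₀ Q hQcompl (hW₀inv g) (hQinv g)
  have h1 : trace ℂ W₀ ((ρ g).restrict (hW₀inv g)) = 1 :=
    by have := trace_one_dim_rep (M := W₀) (subRep ρ W₀ hW₀inv) (by exact hW₀rank) hg; exact this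
  obtain ⟨m, hm⟩ := char_nat hg hyp (finrank ℂ Q) Q (subRep ρ Q hQinv) rfl
  rw [htr, h1, show trace ℂ Q ((ρ g).restrict (hQinv g)) = m from hm] at tradd
  have : ((m + 1 : ℕ) : ℂ) = 0 := by
    rw [Nat.cast_add, Nat.cast_one]
    rw [tradd]
    ring
  exact Nat.succ_ne_zero m (Nat.cast_injective (R := ℂ) (this.trans Nat.cast_zero.symm))

end VOAux


open scoped commutatorElement

section Assembly

lemma commutator_le_vanishingOff (G : Type) [Group G] [Finite G] :
    commutator G ≤ vanishingOff G := by
  intro g hg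
  by_cases hg1 : g = 1
  · subst hg1; exact one_mem _
  by_cases hex : ∃ V : FDRep ℂ G, CategoryTheory.Simple V ∧ 1 < Module.finrank ℂ V ∧
      FDRep.character V g ≠ 0
  · exact Subgroup.subset_closure hex
  · exfalso
    push_neg at hex
    cases nonempty_fintype G
    exact VOAux.regular_char_contradiction hg hg1 fun V hs hr => hex V hs hr

lemma mem_comap_center_iff {G : Type} [Group G] {K : Subgroup G} [K.Normal] {x : G} :
    x ∈ (Subgroup.center (G ⧸ K)).comap (QuotientGroup.mk' K) ↔ ∀ y : G, ⁅x, y⁆ ∈ K := by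
  rw [Subgroup.mem_comap, Subgroup.mem_center_iff]
  constructor
  · intro h y
    rw [← QuotientGroup.eq_one_iff (N := K) ⁅x, y⁆]
    rw [show ((⁅x, y⁆ : G) : G ⧸ K) = (QuotientGroup.mk' K) ⁅x, y⁆ from rfl,
      map_commutatorElement, commutatorElement_eq_one_iff_commute]
    exact (h ((QuotientGroup.mk' K) y)).symm
  · intro h q
    obtain ⟨y, rfl⟩ := QuotientGroup.mk'_surjective K q
    refine (commutatorElement_eq_one_iff_commute.mp ?_).symm
    rw [← map_commutatorElement, QuotientGroup.mk'_apply, QuotientGroup.eq_one_iff]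
    exact h y

lemma paperV_le_paperLCS (G : Type) [Group G] : ∀ i, paperV G i ≤ paperLCS G i := by
  intro i
  induction i with
  | zero => exact (le_top : paperV G 0 ≤ ⊤)
  | succ n ih =>
    match n, ih with
    | 0, _ => exact (le_top : paperV G 1 ≤ ⊤)
    | m+1, ih =>
      show ⁅paperV G (m+1), (⊤ : Subgroup G)⁆ ≤ paperLCS G (m+2)
      have h2 : paperLCS G (m+2) = ⁅paperLCS G (m+1), (⊤ : Subgroup G)⁆ := by
        show (⊤ : Subgroup G).lowerCentralSeries (m+1) = _
        rw [Subgroup.lowerCentralSeries_succ]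
        rfl
      rw [h2]
      exact Subgroup.commutator_mono ih le_rfl

lemma paperLCS_succ_le_paperV (G : Type) [Group G] [Finite G] :
    ∀ n, paperLCS G (n+2) ≤ paperV G (n+1) := by
  intro n
  induction n with
  | zero =>
    show (⊤ : Subgroup G).lowerCentralSeries 1 ≤ vanishingOff G
    rw [Subgroup.lowerCentralSeries_one]
    exact commutator_le_vanishingOff G
  | succ m ih =>
    show (⊤ : Subgroup G).lowerCentralSeries (m+2) ≤ paperV G (m+2)
    rw [Subgroup.lowerCentralSeries_succ]
    calc ⁅(⊤ : Subgroup G).lowerCentralSeries (m+1), (⊤ : Subgroup G)⁆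
        = ⁅paperLCS G (m+2), (⊤ : Subgroup G)⁆ := rfl
      _ ≤ ⁅paperV G (m+1), (⊤ : Subgroup G)⁆ := Subgroup.commutator_mono ih le_rfl
      _ = paperV G (m+2) := rfl

end Assembly

theorem stmt0 (G : Type) [Group G] [Finite G] (k : ℕ) (hk : 2 ≤ k)
    (hlt : paperV G k < paperLCS G k)
    (N : Subgroup G) [N.Normal] (hVN : paperV G k ≤ N) (hNG : N < paperLCS G k)
    (hquot : (paperV G (k-1)).map (QuotientGroup.mk' N) =
      (paperLCS G (k-1)).map (QuotientGroup.mk' N) ⊓ Subgroup.center (G ⧸ N)) :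
    paperV G (k-1) = paperLCS G (k-1) ⊓ paperY G k := by

  obtain ⟨j, rfl⟩ : ∃ j, k = j + 2 := ⟨k - 2, by omega⟩
  have h21 : j + 2 - 1 = j + 1 := rfl
  rw [h21] at hquot ⊢
  have hNV : N ≤ paperV G (j+1) := le_trans hNG.le (paperLCS_succ_le_paperV G j)
  apply le_antisymm
  · refine le_inf (paperV_le_paperLCS G (j+1)) ?_
    intro v hv
    rw [paperY, mem_comap_center_iff]
    intro y
    exact Subgroup.commutator_mem_commutator hv (Subgroup.mem_top y)
  · intro w hw
    obtain ⟨hwL, hwY⟩ := Subgroup.mem_inf.mp hw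
    rw [paperY, mem_comap_center_iff] at hwY
    have hcomm : ∀ y : G, ⁅w, y⁆ ∈ N := fun y => hVN (hwY y)
    have hwmap : (QuotientGroup.mk' N) w ∈ (paperV G (j+1)).map (QuotientGroup.mk' N) := by
      rw [hquot]
      refine Subgroup.mem_inf.mpr ⟨⟨w, hwL, rfl⟩, ?_⟩
      rw [Subgroup.mem_center_iff]
      intro q
      obtain ⟨y, rfl⟩ := QuotientGroup.mk'_surjective N q
      refine (commutatorElement_eq_one_iff_commute.mp ?_).symm
      rw [← map_commutatorElement, QuotientGroup.mk'_apply, QuotientGroup.eq_one_iff]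
      exact hcomm y
    obtain ⟨v, hv, hveq⟩ := hwmap
    have hvw : v⁻¹ * w ∈ N := by
      rw [← QuotientGroup.ker_mk' N, MonoidHom.mem_ker, map_mul, map_inv, hveq]
      group
    have hw' : w = v * (v⁻¹ * w) := by group
    rw [hw']
    exact mul_mem hv (hNV hvw)
end

section
/- If G is a finite nilpotent group and |G_i| = p for a prime p, then for every x ∈ G_{i-1} not lying in G_{i-1} ∩ Y_i, the conjugacy class of x equals the coset x G_i. Here Y_i is defined by Y_i/V_i = Z(G/V_i), and since V_i = 1 in this setting, Y_i = Z(G). -/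
open Subgroup
open scoped Pointwise

open scoped commutatorElement

theorem stmt1 (G : Type) [Group G] [Finite G] [Group.IsNilpotent G]
    (p : ℕ) (hp : p.Prime) (i : ℕ) (hi : 2 ≤ i)
    (hcard : Nat.card (paperLCS G i) = p)
    (x : G) (hx : x ∈ paperLCS G (i-1)) (hx' : x ∉ paperLCS G (i-1) ⊓ Subgroup.center G) :
    conjugatesOf x = x • (paperLCS G i : Set G) := by
  obtain ⟨n, rfl⟩ : ∃ n, i = n + 2 := ⟨i - 2, by omega⟩
  have hGi : paperLCS G (n+2) = (⊤ : Subgroup G).lowerCentralSeries (n+1) := rfl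
  have hGi1 : paperLCS G (n+2-1) = (⊤ : Subgroup G).lowerCentralSeries n := rfl
  set Gi := (⊤ : Subgroup G).lowerCentralSeries (n+1) with hGidef
  rw [hGi1] at hx
  rw [hGi] at hcard ⊢
  -- Gi is nontrivial
  have hGine : Gi ≠ ⊥ := by
    intro h
    rw [h, Subgroup.card_eq_one.mpr rfl] at hcard
    exact hp.one_lt.ne' hcard.symm
  -- the next term of the lower central series is trivial
  have hnext : (⊤ : Subgroup G).lowerCentralSeries (n+2) = ⊥ := by
    have hle : (⊤ : Subgroup G).lowerCentralSeries (n+2) ≤ Gi := Subgroup.lowerCentralSeries_antitone _ (by omega)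
    have hdvd : Nat.card ((⊤ : Subgroup G).lowerCentralSeries (n+2)) ∣ p := hcard ▸ Subgroup.card_dvd_of_le hle
    rcases (Nat.Prime.eq_one_or_self_of_dvd hp _ hdvd) with h1 | h1
    · exact Subgroup.card_eq_one.mp h1
    · exfalso
      have heq : (⊤ : Subgroup G).lowerCentralSeries (n+2) = Gi :=
        Subgroup.eq_of_le_of_card_ge hle (by rw [h1, hcard])
      have hstab : ∀ m, (⊤ : Subgroup G).lowerCentralSeries (n+1+m) = Gi := by
        intro m
        induction m with
        | zero => rfl
        | succ k ih =>
          have : (⊤ : Subgroup G).lowerCentralSeries (n+1+k+1) = ⁅(⊤ : Subgroup G).lowerCentralSeries (n+1+k), ⊤⁆ := rfl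
          rw [show n+1+(k+1) = n+1+k+1 from rfl, this, ih]
          exact heq
      obtain ⟨m, hm⟩ := Subgroup.nilpotent_iff_lowerCentralSeries.mp ‹Group.IsNilpotent G›
      have : Gi ≤ ⊥ := by
        rw [← hm, ← hstab m]
        exact Subgroup.lowerCentralSeries_antitone _ (by omega)
      exact hGine (le_bot_iff.mp this)
  -- Gi is central
  have hcen : Gi ≤ Subgroup.center G := by
    have hcomm : ⁅Gi, (⊤ : Subgroup G)⁆ = ⊥ := hnext
    have := Subgroup.commutator_eq_bot_iff_le_centralizer.mp hcomm
    rwa [Subgroup.coe_top, Subgroup.centralizer_univ] at this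
  -- commutators with x land in Gi
  have hxc : ∀ g : G, ⁅g, x⁆ ∈ Gi := by
    intro g
    have h1 : ⁅x, g⁆ ∈ Gi := commutator_mem_commutator hx (Subgroup.mem_top g)
    have h2 : ⁅g, x⁆ = ⁅x, g⁆⁻¹ := (commutatorElement_inv x g).symm
    rw [h2]; exact inv_mem h1
  have hc : ∀ g y : G, y * ⁅g, x⁆ = ⁅g, x⁆ * y := fun g y =>
    Subgroup.mem_center_iff.mp (hcen (hxc g)) y
  -- the commutator map is a homomorphism
  have hmul : ∀ g h : G, ⁅g * h, x⁆ = ⁅g, x⁆ * ⁅h, x⁆ := by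
    intro g h
    have h1 : ⁅g * h, x⁆ = g * ⁅h, x⁆ * g⁻¹ * ⁅g, x⁆ := by group
    rw [h1, hc h g]
    rw [show ⁅h, x⁆ * g * g⁻¹ * ⁅g, x⁆ = ⁅h, x⁆ * ⁅g, x⁆ by group, ← hc g ⁅h, x⁆]
  let φ : G →* G := MonoidHom.mk' (fun g => ⁅g, x⁆) hmul
  -- the range of φ is all of Gi
  have hKle : φ.range ≤ Gi := by
    rintro _ ⟨g, rfl⟩; exact hxc g
  have hKne : φ.range ≠ ⊥ := by
    intro h
    apply hx'
    refine ⟨hx, Subgroup.mem_center_iff.mpr fun g => ?_⟩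
    have : φ g ∈ (⊥ : Subgroup G) := h ▸ ⟨g, rfl⟩
    have h1 : ⁅g, x⁆ = 1 := Subgroup.mem_bot.mp this
    exact (commutatorElement_eq_one_iff_mul_comm.mp h1)
  have hKeq : φ.range = Gi := by
    have hdvd : Nat.card φ.range ∣ p := hcard ▸ Subgroup.card_dvd_of_le hKle
    rcases (Nat.Prime.eq_one_or_self_of_dvd hp _ hdvd) with h1 | h1
    · exact absurd (Subgroup.card_eq_one.mp h1) hKne
    · exact Subgroup.eq_of_le_of_card_ge hKle (by rw [h1, hcard])
  -- final extensionality
  ext a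
  simp only [conjugatesOf, Set.mem_setOf_eq]
  constructor
  · intro h
    obtain ⟨c, hc'⟩ := isConj_iff.mp h
    rw [Set.mem_smul_set_iff_inv_smul_mem, smul_eq_mul]
    have : x⁻¹ * a = ⁅x⁻¹, c⁆ := by
      rw [← hc', commutatorElement_def]; group
    rw [this]
    exact commutator_mem_commutator (inv_mem hx) (Subgroup.mem_top c)
  · intro ha
    rw [Set.mem_smul_set_iff_inv_smul_mem, smul_eq_mul] at ha
    rw [← hKeq] at ha
    obtain ⟨g, hg⟩ := ha
    rw [show (φ g : G) = ⁅g, x⁆ from rfl] at hg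
    have ha' : a = x * ⁅g, x⁆ := by rw [hg]; group
    refine isConj_iff.mpr ⟨g, ?_⟩
    have hgx : g * x * g⁻¹ = ⁅g, x⁆ * x := by rw [commutatorElement_def]; group
    rw [hgx, ← hc g x]
    exact ha'.symm
end

section
/- Let G be a finite group with a central subgroup Z and an element x such that the conjugacy class of x equals xN for a subgroup N ≤ Z with |N| = |cl(x)|. Then for every irreducible character χ of G with N not contained in ker χ, χ(x) = 0. -/
open Subgroup
open scoped Pointwise

theorem stmt19 (G : Type) [Group G] [Finite G]
    (N : Subgroup G) (hN : N ≤ Subgroup.center G)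
    (x : G) (hcl : conjugatesOf x = x • (N : Set G))
    (W : FDRep ℂ G) (hsimple : CategoryTheory.Simple W)
    (hker : ¬ ∀ g ∈ N, W.character g = W.character 1) :
    W.character x = 0 := by
  push_neg at hker
  obtain ⟨n, hn, hne⟩ := hker
  have hcen := Subgroup.mem_center_iff.mp (hN hn)
  obtain ⟨c, hc⟩ := CategoryTheory.endomorphism_simple_eq_smul_id (X := W) ℂ
    (⟨Action.ρ W n, fun g => by
      rw [← CategoryTheory.End.mul_def, ← CategoryTheory.End.mul_def, ← map_mul, ← map_mul, hcen g]⟩ : W ⟶ W)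
  have hρ : W.ρ n = c • (LinearMap.id : W →ₗ[ℂ] W) :=
    (congrArg (fun f : W ⟶ W => f.hom.hom.hom) hc).symm
  -- character of g * n is c * character g
  have hmul : ∀ g : G, W.character (g * n) = c * W.character g := by
    intro g
    unfold FDRep.character
    rw [map_mul, hρ]
    show LinearMap.trace ℂ W ((W.ρ g).comp (c • LinearMap.id)) = _
    rw [LinearMap.comp_smul, LinearMap.comp_id, map_smul, smul_eq_mul]
  -- c ≠ 1
  have hc1 : c ≠ 1 := by
    intro h
    apply hne
    have := hmul 1
    rwa [one_mul, h, one_mul] at this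
  -- x * n is conjugate to x
  have hconj : W.character (x * n) = W.character x := by
    have hmem : x * n ∈ conjugatesOf x := by
      rw [hcl]
      exact ⟨n, hn, rfl⟩
    obtain ⟨h, hh⟩ := isConj_iff.mp hmem
    rw [← hh, FDRep.char_conj]
  have : c * W.character x = W.character x := by rw [← hmul, hconj]
  have h0 : (c - 1) * W.character x = 0 := by ring_nf; linear_combination this
  rcases mul_eq_zero.mp h0 with h | h
  · exact absurd (sub_eq_zero.mp h) hc1
  · exact h
end
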